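/- arXiv:2008.00301 — 3 statements merged into one kernel-verified Lean document; each statement's English description precedes it below -/
import Mathlib

section
/- Let X ⊆ ℝⁿ and x̂ ∈ ℝⁿ. If x̂ lies in the topological interior of the convex hull of X, then the inverse-feasible region is trivial: C(x̂, X) = {0}. -/
/-!
The superlevel set `{x | ⟪c, x̂⟫ ≤ ⟪c, x⟫}` is a half-space, hence convex, so if `x̂` minimizes
`⟪c, ·⟫` over `X` it also minimizes it over the convex hull. When `x̂` is interior to the hull this
is a local minimum, so by Fermat's rule the derivative `⟪c, ·⟫` of the functional vanishes,
forcing `c = 0`.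
-/

/-- The inverse-feasible region `C(x̂, S)`: the set of cost vectors `c` for which `x̂`
minimizes `⟪c, ·⟫` over `S`. -/
def invFeas {n : ℕ} (xh : EuclideanSpace ℝ (Fin n)) (S : Set (EuclideanSpace ℝ (Fin n))) :
    Set (EuclideanSpace ℝ (Fin n)) :=
  {c | ∀ x ∈ S, (inner ℝ c xh : ℝ) ≤ inner ℝ c x}

theorem LinearMap.isMinOn_convexHull {E : Type*} [AddCommGroup E] [Module ℝ E]
    {f : E →ₗ[ℝ] ℝ} {X : Set E} {a : E} (h : IsMinOn f X a) :
    IsMinOn f (convexHull ℝ X) a :=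
  isMinOn_iff.mpr fun _ hx =>
    convexHull_min (isMinOn_iff.mp h) (convex_halfSpace_ge f.isLinear (f a)) hx

theorem eq_zero_of_isMinOn_inner_of_mem_interior {E : Type*} [NormedAddCommGroup E]
    [InnerProductSpace ℝ E] {c a : E} {S : Set E} (h : IsMinOn (inner ℝ c) S a)
    (ha : a ∈ interior S) : c = 0 := by
  have hloc : IsLocalMin (innerSL ℝ c) a := h.isLocalMin (mem_interior_iff_mem_nhds.mp ha)
  have hderiv : innerSL ℝ c = 0 := hloc.hasFDerivAt_eq_zero (innerSL ℝ c).hasFDerivAt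
  simpa using congr($hderiv c)

/-- If `x̂` lies in the interior of the convex hull of `X`, the inverse-feasible
region is trivial. -/
theorem invFeas_eq_zero_of_mem_interior {n : ℕ} (X : Set (EuclideanSpace ℝ (Fin n)))
    (xh : EuclideanSpace ℝ (Fin n)) (h : xh ∈ interior (convexHull ℝ X)) :
    invFeas xh X = {0} := by
  ext c
  constructor
  · intro hc
    have hX : IsMinOn (innerₗ _ c) X xh := isMinOn_iff.mpr hc
    exact eq_zero_of_isMinOn_inner_of_mem_interior (LinearMap.isMinOn_convexHull hX) h
  · rintro rfl
    simp [invFeas]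
end

section
/- (Theorem 1, precise form.) Let x̂ ∈ ℝⁿ and let X, G ⊆ ℝⁿ. Then G is a generator set for X, i.e., C(x̂, G) = C(x̂, X), if and only if the topological closures of the pointed conic hulls of the translated sets coincide: closure (cone({x − x̂ : x ∈ G})) = closure (cone({x − x̂ : x ∈ X})). -/
/-- The pointed conic hull of `S`: all finite nonnegative linear combinations of
elements of `S`, i.e. the `ℝ≥0`-submodule spanned by `S`. -/
def cone {n : ℕ} (S : Set (EuclideanSpace ℝ (Fin n))) : Set (EuclideanSpace ℝ (Fin n)) :=
  (Submodule.span {c : ℝ // 0 ≤ c} S : Submodule {c : ℝ // 0 ≤ c} (EuclideanSpace ℝ (Fin n)))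

/-!
`C(x̂, S)` is the inner dual cone of the translate `S - x̂`. By Farkas' lemma (the bipolar
theorem) the double dual of any set is the closure of its conic hull, while conversely a set,
its conic hull and the closure of that hull all have the same dual. Hence two sets have the
same dual cone exactly when their conic hulls have the same closure.
-/

open scoped RealInnerProductSpace

namespace ProperCone

variable {E : Type*} [NormedAddCommGroup E] [InnerProductSpace ℝ E] [CompleteSpace E]

lemma innerDual_closure (s : Set E) : innerDual (closure s) = innerDual s := by
  refine le_antisymm (innerDual_le_innerDual subset_closure) fun y hy => ?_
  have hclosed : IsClosed {x : E | 0 ≤ ⟪x, y⟫} :=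
    isClosed_le continuous_const (continuous_id.inner continuous_const)
  exact fun x hx => closure_minimal hy hclosed hx

lemma innerDual_hull (s : Set E) : innerDual (PointedCone.hull ℝ s : Set E) = innerDual s :=
  ClosedSubmodule.toSubmodule_injective (PointedCone.dual_hull s)

lemma innerDual_innerDual_eq_closure_hull (s : Set E) :
    (innerDual (innerDual s : Set E) : Set E) = closure (PointedCone.hull ℝ s : Set E) := by
  let K : ProperCone ℝ E := Submodule.closure (PointedCone.hull ℝ s)
  have hK : (K : Set E) = closure (PointedCone.hull ℝ s : Set E) := rfl
  rw [← hK, ← K.innerDual_innerDual, hK, innerDual_closure, innerDual_hull]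

lemma innerDual_eq_innerDual_iff {s t : Set E} :
    innerDual s = innerDual t ↔
      closure (PointedCone.hull ℝ s : Set E) = closure (PointedCone.hull ℝ t : Set E) := by
  refine ⟨fun h => ?_, fun h => ?_⟩
  · rw [← innerDual_innerDual_eq_closure_hull, ← innerDual_innerDual_eq_closure_hull, h]
  · rw [← innerDual_hull s, ← innerDual_closure, h, innerDual_closure, innerDual_hull]

end ProperCone

lemma invFeas_eq_innerDual {n : ℕ} (xh : EuclideanSpace ℝ (Fin n))
    (S : Set (EuclideanSpace ℝ (Fin n))) :
    invFeas xh S = ProperCone.innerDual ((fun x => x - xh) '' S) := by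
  ext c
  simp only [invFeas, Set.mem_ofPred_eq, SetLike.mem_coe, ProperCone.mem_innerDual,
    Set.forall_mem_image, real_inner_comm c, inner_sub_right, sub_nonneg]

/-- Theorem 1, precise form: `G` is a generator set for `X` iff the closures of
the pointed conic hulls of the translated sets coincide. -/
theorem generatorSet_iff_closure_cone_eq {n : ℕ} (xh : EuclideanSpace ℝ (Fin n))
    (X G : Set (EuclideanSpace ℝ (Fin n))) :
    invFeas xh G = invFeas xh X ↔
      closure (cone ((fun x => x - xh) '' G)) = closure (cone ((fun x => x - xh) '' X)) := by
  rw [invFeas_eq_innerDual, invFeas_eq_innerDual, SetLike.coe_set_eq]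
  exact ProperCone.innerDual_eq_innerDual_iff
end

section
/- (Corollary 1, sufficiency.) Let x̂ ∈ ℝⁿ and let G ⊆ X ⊆ ℝⁿ. If every forward-feasible point lies in the cone generated by G from x̂, i.e., x − x̂ ∈ cone({g − x̂ : g ∈ G}) for all x ∈ X, then G is a forward-feasible generator set: C(x̂, G) = C(x̂, X). -/
/-!
A cost vector `c` lies in `C(x̂, S)` exactly when `⟪c, x - x̂⟫ ≥ 0` for all `x ∈ S`, i.e. when `c`
lies in the dual cone of `S - x̂`. A dual cone does not change when the set is replaced by its
conic hull, so `C(x̂, G) ⊆ C(x̂, X)` as soon as `X - x̂ ⊆ cone (G - x̂)`; the reverse inclusion is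
the antitonicity of `C(x̂, ·)`.
-/

open scoped RealInnerProductSpace

theorem inner_nonneg_of_mem_hull {E : Type*} [NormedAddCommGroup E] [InnerProductSpace ℝ E]
    {c : E} {s : Set E} (hs : ∀ x ∈ s, 0 ≤ ⟪c, x⟫) {v : E} (hv : v ∈ PointedCone.hull ℝ s) :
    0 ≤ ⟪c, v⟫ := by
  have hle : PointedCone.hull ℝ s ≤ PointedCone.dual (innerₗ E) {c} :=
    Submodule.span_le.mpr fun x hx => by simpa using hs x hx
  simpa using hle hv

theorem mem_invFeas_iff {n : ℕ} {xh c : EuclideanSpace ℝ (Fin n)}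
    {S : Set (EuclideanSpace ℝ (Fin n))} : c ∈ invFeas xh S ↔ ∀ x ∈ S, 0 ≤ ⟪c, x - xh⟫ := by
  simp only [invFeas, Set.mem_ofPred_eq, inner_sub_right, sub_nonneg]

theorem invFeas_anti {n : ℕ} (xh : EuclideanSpace ℝ (Fin n))
    {S T : Set (EuclideanSpace ℝ (Fin n))} (hST : S ⊆ T) : invFeas xh T ⊆ invFeas xh S :=
  fun _ hc x hx => hc x (hST hx)

/-- Corollary 1, sufficiency: if `G ⊆ X` and every point of `X` lies in the cone
generated by `G` from `x̂`, then `G` is a forward-feasible generator set. -/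
theorem forwardFeasible_generatorSet_of_subset_cone {n : ℕ}
    (xh : EuclideanSpace ℝ (Fin n)) (X G : Set (EuclideanSpace ℝ (Fin n)))
    (hGX : G ⊆ X)
    (h : ∀ x ∈ X, x - xh ∈ cone ((fun g => g - xh) '' G)) :
    invFeas xh G = invFeas xh X := by
  refine Set.Subset.antisymm (fun c hc => ?_) (invFeas_anti xh hGX)
  rw [mem_invFeas_iff] at hc ⊢
  have hcone : ∀ v ∈ cone ((fun g => g - xh) '' G), 0 ≤ ⟪c, v⟫ := fun v hv =>
    inner_nonneg_of_mem_hull (by rintro _ ⟨g, hg, rfl⟩; exact hc g hg) hv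
  exact fun x hx => hcone _ (h x hx)
end
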